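/- Every positive integer N has a unique representation N = Σ_{k=1}^ℓ b_k (-1)^{k-1} P_k where (P_k) = (1, 2, 5, 12, 29, ...) are the Pell numbers, digits b_k ∈ {0,1,2}, and b_k = 2 implies b_{k+1} = 0. (Alternating silver-ratio base expansion.) -/
import Mathlib

private def pell : ℕ → ℕ
  | 0 => 0
  | 1 => 1
  | n + 2 => 2 * pell (n + 1) + pell n

private lemma pell_rec (n : ℕ) : pell (n + 2) = 2 * pell (n + 1) + pell n := rfl

private lemma pell_pos (n : ℕ) : 1 ≤ pell (n + 1) := by
  induction n with
  | zero => simp [pell]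
  | succ m ih => rw [pell_rec]; omega

private lemma pell_le (n : ℕ) : pell n ≤ pell (n + 1) := by
  cases n with
  | zero => simp [pell]
  | succ m => rw [pell_rec]; omega

private lemma pell_ge (n : ℕ) : n ≤ pell n := by
  suffices h : ∀ n, n ≤ pell n ∧ n + 1 ≤ pell (n + 1) from (h n).1
  intro n
  induction n with
  | zero => simp [pell]
  | succ m ih => refine ⟨ih.2, ?_⟩; rw [pell_rec]; omega

private def Adm (b : ℕ → ℕ) : Prop :=
  b 0 = 0 ∧ (∀ k, b k ≤ 2) ∧ ∀ k, b k = 2 → b (k + 1) = 0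

private def fsum (n : ℕ) (b : ℕ → ℕ) : ℤ :=
  ∑ k ∈ Finset.range (n + 1), (b k : ℤ) * (-1) ^ (k + 1) * (pell k : ℤ)

private lemma fsum_succ (n : ℕ) (b : ℕ → ℕ) :
    fsum (n + 1) b = fsum n b + (b (n + 1) : ℤ) * (-1) ^ n * (pell (n + 1) : ℤ) := by
  have h : ((-1 : ℤ)) ^ (n + 1 + 1) = (-1) ^ n := by
    rw [pow_succ, pow_succ]; ring
  rw [fsum, Finset.sum_range_succ, h, fsum]

private def loA (n : ℕ) : ℤ := if n % 2 = 0 then 1 - pell (n + 1) else 1 - pell n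
private def hiA (n : ℕ) : ℤ := if n % 2 = 0 then pell n else pell (n + 1)
private def loB (n : ℕ) : ℤ := if n % 2 = 0 then pell n + 1 - pell (n + 1) else 1 - pell n
private def hiB (n : ℕ) : ℤ := if n % 2 = 0 then pell n else pell (n + 1) - pell n

private lemma bounds (b : ℕ → ℕ) (hb : Adm b) : ∀ n,
    (loA n ≤ fsum n b ∧ fsum n b ≤ hiA n) ∧
    (b n ≤ 1 → loB n ≤ fsum n b ∧ fsum n b ≤ hiB n) := by
  intro n
  induction n with
  | zero =>
    have h0 : fsum 0 b = 0 := by simp [fsum, hb.1]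
    simp [h0, loA, hiA, loB, hiB, pell]
  | succ n ih =>
    obtain ⟨hA, hB⟩ := ih
    have hrec : (pell (n + 1 + 1) : ℤ) = 2 * pell (n + 1) + pell n := by
      exact_mod_cast pell_rec n
    have hle : (pell n : ℤ) ≤ pell (n + 1) := by exact_mod_cast pell_le n
    have hp0 : (0 : ℤ) ≤ pell n := by positivity
    have hd : b (n + 1) = 0 ∨ b (n + 1) = 1 ∨ b (n + 1) = 2 := by
      have := hb.2.1 (n + 1); omega
    have hbn1 : 1 ≤ b (n + 1) → b n ≤ 1 := by
      intro h
      by_cases hbn : b n = 2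
      · have := hb.2.2 n hbn; omega
      · have := hb.2.1 n; omega
    rw [fsum_succ]
    rcases Nat.even_or_odd n with he | ho
    · have he' : n % 2 = 0 := Nat.even_iff.mp he
      have he1 : (n + 1) % 2 = 1 := by omega
      have hsgn : ((-1 : ℤ)) ^ n = 1 := Even.neg_one_pow he
      norm_num [loA, hiA, loB, hiB, he', he1] at hA hB ⊢
      rw [hsgn]
      rcases hd with h0 | h1 | h2
      · rw [h0]; push_cast
        constructor
        · constructor <;> omega
        · intro _; constructor <;> omega
      · have hBB := hB (hbn1 (by omega))
        rw [h1]; push_cast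
        constructor
        · constructor <;> omega
        · intro _; constructor <;> omega
      · have hBB := hB (hbn1 (by omega))
        rw [h2]; push_cast
        constructor
        · constructor <;> omega
        · intro h; first | exact h.elim | (rw [h2] at h; omega) | omega
    · have ho' : n % 2 = 1 := Nat.odd_iff.mp ho
      have he1 : (n + 1) % 2 = 0 := by omega
      have hsgn : ((-1 : ℤ)) ^ n = -1 := Odd.neg_one_pow ho
      norm_num [loA, hiA, loB, hiB, ho', he1] at hA hB ⊢
      rw [hsgn]
      rcases hd with h0 | h1 | h2
      · rw [h0]; push_cast
        constructor
        · constructor <;> omega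
        · intro _; constructor <;> omega
      · have hBB := hB (hbn1 (by omega))
        rw [h1]; push_cast
        constructor
        · constructor <;> omega
        · intro _; constructor <;> omega
      · have hBB := hB (hbn1 (by omega))
        rw [h2]; push_cast
        constructor
        · constructor <;> omega
        · intro h; first | exact h.elim | (rw [h2] at h; omega) | omega

private lemma fsum_update (n m : ℕ) (b : ℕ → ℕ) (d : ℕ) (h : n < m) :
    fsum n (Function.update b m d) = fsum n b := by
  unfold fsum
  refine Finset.sum_congr rfl fun k hk => ?_
  rw [Finset.mem_range] at hk
  rw [Function.update_of_ne (by omega)]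

private lemma extend (b : ℕ → ℕ) (d n : ℕ) (hAdm : Adm b)
    (hsupp : ∀ k, n < k → b k = 0) (hd : d ≤ 2) (hdn : 1 ≤ d → b n ≤ 1) :
    Adm (Function.update b (n + 1) d) ∧
    (∀ k, n + 1 < k → Function.update b (n + 1) d k = 0) ∧
    Function.update b (n + 1) d (n + 1) = d ∧
    fsum (n + 1) (Function.update b (n + 1) d) =
      fsum n b + (d : ℤ) * (-1) ^ n * (pell (n + 1) : ℤ) := by
  refine ⟨⟨?_, ?_, ?_⟩, ?_, ?_, ?_⟩
  · rw [Function.update_of_ne (by omega)]; exact hAdm.1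
  · intro k
    by_cases hk : k = n + 1
    · subst hk; rw [Function.update_self]; exact hd
    · rw [Function.update_of_ne hk]; exact hAdm.2.1 k
  · intro k hk
    by_cases h1 : k = n + 1
    · subst h1
      rw [Function.update_self] at hk
      rw [Function.update_of_ne (by omega)]
      exact hsupp (n + 2) (by omega)
    · rw [Function.update_of_ne h1] at hk
      by_cases h2 : k + 1 = n + 1
      · have hkn : k = n := by omega
        subst hkn
        have := hdn
        by_cases hd1 : 1 ≤ d
        · exact absurd (hdn hd1) (by omega)
        · rw [h2, Function.update_self]; omega
      · rw [Function.update_of_ne h2]; exact hAdm.2.2 k hk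
  · intro k hk; by_cases h1 : k = n + 1
    · omega
    · rw [Function.update_of_ne h1]; exact hsupp k (by omega)
  · rw [Function.update_self]
  · rw [fsum_succ, fsum_update n (n + 1) b d (by omega), Function.update_self]

private lemma surj : ∀ n z,
    ((loA n ≤ z ∧ z ≤ hiA n) →
      ∃ b, Adm b ∧ (∀ k, n < k → b k = 0) ∧ fsum n b = z) ∧
    ((loB n ≤ z ∧ z ≤ hiB n) →
      ∃ b, Adm b ∧ (∀ k, n < k → b k = 0) ∧ b n ≤ 1 ∧ fsum n b = z) := by
  intro n
  induction n with
  | zero =>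
    intro z
    have hz0 : ∀ h : loA 0 ≤ z ∧ z ≤ hiA 0, z = 0 := by
      intro h; simp [loA, hiA, pell] at h; omega
    have hz0' : ∀ h : loB 0 ≤ z ∧ z ≤ hiB 0, z = 0 := by
      intro h; simp [loB, hiB, pell] at h; omega
    have hbase : Adm (fun _ => 0) ∧ (∀ k, 0 < k → (fun _ => (0:ℕ)) k = 0) ∧
        (fun _ => (0:ℕ)) 0 ≤ 1 ∧ fsum 0 (fun _ => 0) = 0 := by
      refine ⟨⟨rfl, fun k => Nat.zero_le 2, fun k h => rfl⟩, fun k _ => rfl, Nat.zero_le 1, ?_⟩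
      simp [fsum]
    constructor
    · intro h; exact ⟨_, hbase.1, hbase.2.1, (hz0 h) ▸ hbase.2.2.2⟩
    · intro h; exact ⟨_, hbase.1, hbase.2.1, hbase.2.2.1, (hz0' h) ▸ hbase.2.2.2⟩
  | succ n ih =>
    intro z
    have hrec : (pell (n + 1 + 1) : ℤ) = 2 * pell (n + 1) + pell n := by
      exact_mod_cast pell_rec n
    have hle : (pell n : ℤ) ≤ pell (n + 1) := by exact_mod_cast pell_le n
    have hp0 : (0 : ℤ) ≤ pell n := by positivity
    -- generic digit-adding step
    have step : ∀ d : ℕ, d ≤ 2 →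
        (loA n ≤ z - d * (-1) ^ n * pell (n + 1) ∧
          z - d * (-1) ^ n * pell (n + 1) ≤ hiA n ∧ d = 0) ∨
        (loB n ≤ z - d * (-1) ^ n * pell (n + 1) ∧
          z - d * (-1) ^ n * pell (n + 1) ≤ hiB n) →
        ∃ b, Adm b ∧ (∀ k, n + 1 < k → b k = 0) ∧ b (n + 1) = d ∧
          fsum (n + 1) b = z := by
      intro d hd hcase
      rcases hcase with ⟨h1, h2, h3⟩ | ⟨h1, h2⟩
      · obtain ⟨b, hb, hs, hf⟩ := (ih _).1 ⟨h1, h2⟩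
        obtain ⟨e1, e2, e3, e4⟩ := extend b d n hb hs hd (by omega)
        exact ⟨_, e1, e2, e3, by rw [e4, hf]; ring⟩
      · obtain ⟨b, hb, hs, hb1, hf⟩ := (ih _).2 ⟨h1, h2⟩
        obtain ⟨e1, e2, e3, e4⟩ := extend b d n hb hs hd (fun _ => hb1)
        exact ⟨_, e1, e2, e3, by rw [e4, hf]; ring⟩
    rcases Nat.even_or_odd n with he | ho
    · have he' : n % 2 = 0 := Nat.even_iff.mp he
      have he1 : (n + 1) % 2 = 1 := by omega
      have hsgn : ((-1 : ℤ)) ^ n = 1 := Even.neg_one_pow he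
      rw [hsgn] at step
      constructor
      · rintro ⟨h1, h2⟩
        norm_num [loA, hiA, he1] at h1 h2
        by_cases c0 : z ≤ pell n
        · obtain ⟨b, hb, hs, _, hf⟩ := step 0 (by omega)
            (Or.inl ⟨by norm_num [loA, he']; omega, by norm_num [hiA, he']; omega, rfl⟩)
          exact ⟨b, hb, hs, hf⟩
        · by_cases c1 : z ≤ pell n + pell (n + 1)
          · obtain ⟨b, hb, hs, _, hf⟩ := step 1 (by omega)
              (Or.inr ⟨by norm_num [loB, he']; omega, by norm_num [hiB, he']; omega⟩)
            exact ⟨b, hb, hs, hf⟩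
          · obtain ⟨b, hb, hs, _, hf⟩ := step 2 (by omega)
              (Or.inr ⟨by norm_num [loB, he']; omega, by norm_num [hiB, he']; omega⟩)
            exact ⟨b, hb, hs, hf⟩
      · rintro ⟨h1, h2⟩
        norm_num [loB, hiB, he1] at h1 h2
        by_cases c0 : z ≤ pell n
        · obtain ⟨b, hb, hs, hbd, hf⟩ := step 0 (by omega)
            (Or.inl ⟨by norm_num [loA, he']; omega, by norm_num [hiA, he']; omega, rfl⟩)
          exact ⟨b, hb, hs, by omega, hf⟩
        · obtain ⟨b, hb, hs, hbd, hf⟩ := step 1 (by omega)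
            (Or.inr ⟨by norm_num [loB, he']; omega, by norm_num [hiB, he']; omega⟩)
          exact ⟨b, hb, hs, by omega, hf⟩
    · have ho' : n % 2 = 1 := Nat.odd_iff.mp ho
      have he1 : (n + 1) % 2 = 0 := by omega
      have hsgn : ((-1 : ℤ)) ^ n = -1 := Odd.neg_one_pow ho
      rw [hsgn] at step
      constructor
      · rintro ⟨h1, h2⟩
        norm_num [loA, hiA, he1] at h1 h2
        by_cases c0 : 1 - (pell n : ℤ) ≤ z
        · obtain ⟨b, hb, hs, _, hf⟩ := step 0 (by omega)
            (Or.inl ⟨by norm_num [loA, ho']; omega, by norm_num [hiA, ho']; omega, rfl⟩)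
          exact ⟨b, hb, hs, hf⟩
        · by_cases c1 : 1 - (pell n : ℤ) - pell (n + 1) ≤ z
          · obtain ⟨b, hb, hs, _, hf⟩ := step 1 (by omega)
              (Or.inr ⟨by norm_num [loB, ho']; omega, by norm_num [hiB, ho']; omega⟩)
            exact ⟨b, hb, hs, hf⟩
          · obtain ⟨b, hb, hs, _, hf⟩ := step 2 (by omega)
              (Or.inr ⟨by norm_num [loB, ho']; omega, by norm_num [hiB, ho']; omega⟩)
            exact ⟨b, hb, hs, hf⟩
      · rintro ⟨h1, h2⟩
        norm_num [loB, hiB, he1] at h1 h2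
        by_cases c0 : 1 - (pell n : ℤ) ≤ z
        · obtain ⟨b, hb, hs, hbd, hf⟩ := step 0 (by omega)
            (Or.inl ⟨by norm_num [loA, ho']; omega, by norm_num [hiA, ho']; omega, rfl⟩)
          exact ⟨b, hb, hs, by omega, hf⟩
        · obtain ⟨b, hb, hs, hbd, hf⟩ := step 1 (by omega)
            (Or.inr ⟨by norm_num [loB, ho']; omega, by norm_num [hiB, ho']; omega⟩)
          exact ⟨b, hb, hs, by omega, hf⟩

private lemma adm_update_zero (b : ℕ → ℕ) (m : ℕ) (hb : Adm b) (hm : m ≠ 0) :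
    Adm (Function.update b m 0) := by
  refine ⟨?_, ?_, ?_⟩
  · rw [Function.update_of_ne (Ne.symm hm)]; exact hb.1
  · intro k
    by_cases hk : k = m
    · subst hk; rw [Function.update_self]; omega
    · rw [Function.update_of_ne hk]; exact hb.2.1 k
  · intro k hk
    by_cases hk1 : k = m
    · subst hk1; rw [Function.update_self] at hk; omega
    · rw [Function.update_of_ne hk1] at hk
      by_cases hk2 : k + 1 = m
      · rw [hk2, Function.update_self]
      · rw [Function.update_of_ne hk2]; exact hb.2.2 k hk

private lemma inj : ∀ n (b c : ℕ → ℕ), Adm b → Adm c →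
    (∀ k, n < k → b k = 0) → (∀ k, n < k → c k = 0) →
    fsum n b = fsum n c → ∀ k, b k = c k := by
  intro n
  induction n with
  | zero =>
    intro b c hb hc hsb hsc _ k
    rcases Nat.eq_zero_or_pos k with hk | hk
    · subst hk; rw [hb.1, hc.1]
    · rw [hsb k hk, hsc k hk]
  | succ n ih =>
    intro b c hb hc hsb hsc hf k
    have hrec : (pell (n + 1 + 1) : ℤ) = 2 * pell (n + 1) + pell n := by
      exact_mod_cast pell_rec n
    have hle : (pell n : ℤ) ≤ pell (n + 1) := by exact_mod_cast pell_le n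
    have hp0 : (0 : ℤ) ≤ pell n := by positivity
    have hq1 : (1 : ℤ) ≤ pell (n + 1) := by exact_mod_cast pell_pos n
    have hdb : b (n + 1) = 0 ∨ b (n + 1) = 1 ∨ b (n + 1) = 2 := by
      have := hb.2.1 (n + 1); omega
    have hdc : c (n + 1) = 0 ∨ c (n + 1) = 1 ∨ c (n + 1) = 2 := by
      have := hc.2.1 (n + 1); omega
    have hbn : 1 ≤ b (n + 1) → b n ≤ 1 := by
      intro h
      by_cases hbn : b n = 2
      · have := hb.2.2 n hbn; omega
      · have := hb.2.1 n; omega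
    have hcn : 1 ≤ c (n + 1) → c n ≤ 1 := by
      intro h
      by_cases hcn : c n = 2
      · have := hc.2.2 n hcn; omega
      · have := hc.2.1 n; omega
    have hBb := bounds b hb n
    have hBc := bounds c hc n
    rw [fsum_succ, fsum_succ] at hf
    -- show top digits equal
    have hdeq : b (n + 1) = c (n + 1) := by
      rcases Nat.even_or_odd n with he | ho
      · have he' : n % 2 = 0 := Nat.even_iff.mp he
        have hsgn : ((-1 : ℤ)) ^ n = 1 := Even.neg_one_pow he
        rw [hsgn] at hf
        norm_num [loA, hiA, loB, hiB, he'] at hBb hBc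
        rcases hdb with h1 | h1 | h1 <;> rcases hdc with h2 | h2 | h2 <;>
          rw [h1, h2] at hf <;> push_cast at hf <;>
          first
            | omega
            | (exfalso
               first
                 | (have hx := hBb.2 (hbn (by omega)); have hy := hBc.1; omega)
                 | (have hx := hBb.1; have hy := hBc.2 (hcn (by omega)); omega)
                 | (have hx := hBb.2 (hbn (by omega)); have hy := hBc.2 (hcn (by omega)); omega))
      · have ho' : n % 2 = 1 := Nat.odd_iff.mp ho
        have hsgn : ((-1 : ℤ)) ^ n = -1 := Odd.neg_one_pow ho
        rw [hsgn] at hf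
        norm_num [loA, hiA, loB, hiB, ho'] at hBb hBc
        rcases hdb with h1 | h1 | h1 <;> rcases hdc with h2 | h2 | h2 <;>
          rw [h1, h2] at hf <;> push_cast at hf <;>
          first
            | omega
            | (exfalso
               first
                 | (have hx := hBb.2 (hbn (by omega)); have hy := hBc.1; omega)
                 | (have hx := hBb.1; have hy := hBc.2 (hcn (by omega)); omega)
                 | (have hx := hBb.2 (hbn (by omega)); have hy := hBc.2 (hcn (by omega)); omega))
    have hf' : fsum n b = fsum n c := by
      rw [hdeq] at hf
      exact add_right_cancel hf
    -- reduce to updated functions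
    have hkey := ih (Function.update b (n + 1) 0) (Function.update c (n + 1) 0)
      (adm_update_zero b (n + 1) hb (by omega)) (adm_update_zero c (n + 1) hc (by omega))
      (fun j hj => by
        by_cases h : j = n + 1
        · subst h; exact Function.update_self _ _ _
        · rw [Function.update_of_ne h]; exact hsb j (by omega))
      (fun j hj => by
        by_cases h : j = n + 1
        · subst h; exact Function.update_self _ _ _
        · rw [Function.update_of_ne h]; exact hsc j (by omega))
      (by rw [fsum_update n (n+1) b 0 (by omega), fsum_update n (n+1) c 0 (by omega)]
          exact hf')
    by_cases h : k = n + 1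
    · subst h; exact hdeq
    · have := hkey k
      rwa [Function.update_of_ne h, Function.update_of_ne h] at this

private lemma support_bound (c : ℕ → ℕ) (h : (Function.support c).Finite) :
    ∃ m, ∀ k, m < k → c k = 0 := by
  obtain ⟨m, hm⟩ := h.bddAbove
  refine ⟨m, fun k hk => ?_⟩
  by_contra hne
  exact absurd (hm (Function.mem_support.mpr hne)) (by omega)

/-- Unique alternating silver-ratio (negaPell) expansion: every positive
integer is uniquely `Σ b_k (-1)^{k-1} P_k` with Pell numbers
`P 1 = 1, P 2 = 2, P (k+2) = 2 P (k+1) + P k`, digits `b_k ∈ {0,1,2}`, and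
`b_k = 2 → b_{k+1} = 0`. -/
theorem negaPell_expansion (P : ℕ → ℕ)
    (hP1 : P 1 = 1) (hP2 : P 2 = 2)
    (hPrec : ∀ k, 1 ≤ k → P (k + 2) = 2 * P (k + 1) + P k)
    (N : ℕ) (hN : 1 ≤ N) :
    ∃! b : ℕ → ℕ,
      b 0 = 0 ∧ (Function.support b).Finite ∧
      (∀ k, b k ≤ 2) ∧ (∀ k, b k = 2 → b (k + 1) = 0) ∧
      (N : ℤ) = ∑ᶠ k, (b k : ℤ) * (-1) ^ (k + 1) * (P k : ℤ) := by
  have hPeq : ∀ k, 1 ≤ k → P k = pell k := by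
    have key : ∀ k, P (k + 1) = pell (k + 1) ∧ P (k + 2) = pell (k + 2) := by
      intro k
      induction k with
      | zero =>
        constructor
        · rw [hP1]; simp [pell]
        · rw [hP2]; simp [pell, pell_rec]
      | succ m ih =>
        refine ⟨ih.2, ?_⟩
        have e : P (m + 1 + 2) = 2 * P (m + 1 + 1) + P (m + 1) := hPrec (m + 1) (by omega)
        have e2 : pell (m + 1 + 2) = 2 * pell (m + 1 + 1) + pell (m + 1) := pell_rec (m + 1)
        have h1 : P (m + 1 + 1) = pell (m + 1 + 1) := ih.2
        rw [e, e2, ih.1, h1]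
    intro k hk
    obtain ⟨j, rfl⟩ : ∃ j, k = j + 1 := ⟨k - 1, by omega⟩
    exact (key j).1
  have hconv : ∀ (b : ℕ → ℕ) (n : ℕ), b 0 = 0 → (∀ k, n < k → b k = 0) →
      (∑ᶠ k, (b k : ℤ) * (-1) ^ (k + 1) * (P k : ℤ)) = fsum n b := by
    intro b n h0 hs
    rw [finsum_eq_sum_of_support_subset (s := Finset.range (n + 1)) _ ?sub]
    case sub =>
      intro k hk
      simp only [Function.mem_support] at hk
      rw [Finset.coe_range, Set.mem_Iio]
      by_contra hkn
      exact hk (by rw [hs k (by omega)]; ring)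
    unfold fsum
    refine Finset.sum_congr rfl fun k _ => ?_
    rcases Nat.eq_zero_or_pos k with rfl | hkpos
    · rw [h0]; simp
    · rw [hPeq k hkpos]
  set n := 2 * N + 1 with hn
  have hodd : n % 2 = 1 := by omega
  have hintval : loA n ≤ (N : ℤ) ∧ (N : ℤ) ≤ hiA n := by
    have hg : 2 * N + 2 ≤ pell (2 * N + 2) := pell_ge (2 * N + 2)
    have hp : 1 ≤ pell (2 * N + 1) := pell_pos (2 * N)
    norm_num [loA, hiA, hodd]
    constructor
    · have : (1 : ℤ) ≤ pell (2 * N + 1) := by exact_mod_cast hp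
      omega
    · have : (2 * N + 2 : ℤ) ≤ pell (2 * N + 2) := by exact_mod_cast hg
      have h22 : n + 1 = 2 * N + 2 := by omega
      rw [h22]; omega
  obtain ⟨b, hbAdm, hbs, hbf⟩ := (surj n N).1 hintval
  refine ⟨b, ⟨hbAdm.1, ?_, hbAdm.2.1, hbAdm.2.2, ?_⟩, ?_⟩
  · refine Set.Finite.subset (Finset.range (n + 1)).finite_toSet fun k hk => ?_
    simp only [Function.mem_support] at hk
    rw [Finset.coe_range, Set.mem_Iio]
    by_contra hkn
    exact hk (hbs k (by omega))
  · rw [hconv b n hbAdm.1 hbs, hbf]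
  · rintro c ⟨hc0, hcfin, hc2, hc20, hcsum⟩
    obtain ⟨m, hm⟩ := support_bound c hcfin
    set n' := max n m with hn'
    have hsb' : ∀ k, n' < k → b k = 0 := fun k hk => hbs k (by
      have := le_max_left n m; omega)
    have hsc' : ∀ k, n' < k → c k = 0 := fun k hk => hm k (by
      have := le_max_right n m; omega)
    have eb : fsum n' b = (N : ℤ) := by
      rw [← hconv b n' hbAdm.1 hsb', hconv b n hbAdm.1 hbs, hbf]
    have ec : fsum n' c = (N : ℤ) := by
      rw [← hconv c n' hc0 hsc', ← hcsum]
    exact funext (inj n' c b ⟨hc0, hc2, hc20⟩ hbAdm hsc' hsb' (ec.trans eb.symm))
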